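/- arXiv:2501.13187 — 3 statements merged into one kernel-verified Lean document; each statement's English description precedes it below -/
import Mathlib

section
/- For the Krichevsky–Trofimov (add-1/2) estimator on a binary alphabet, the cumulative pointwise log-loss regret is at most (1/2)·log t + 1 for every t ≥ 1 and every sequence x_1,...,x_t ∈ {0,1}: sup_{q ∈ Δ_1} Σ_{i=1}^t [log(1/q̂_i(x_i)) − log(1/q(x_i))] ≤ (1/2)·log t + 1. -/
open Finset


lemma sinh_le_mul_cosh (x : ℝ) (hx : 0 ≤ x) : Real.sinh x ≤ x * Real.cosh x := by
  have h : MonotoneOn (fun y => y * Real.cosh y - Real.sinh y) (Set.Ici 0) := by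
    apply monotoneOn_of_deriv_nonneg (convex_Ici 0)
    · exact (Continuous.continuousOn (by continuity))
    · intro y _
      exact (((differentiable_id.mul Real.differentiable_cosh).sub
        Real.differentiable_sinh) y).differentiableWithinAt
    · intro y hy
      rw [interior_Ici, Set.mem_Ioi] at hy
      have hd : HasDerivAt (fun y => y * Real.cosh y - Real.sinh y)
          ((1 * Real.cosh y + y * Real.sinh y) - Real.cosh y) y :=
        ((hasDerivAt_id y).mul (Real.hasDerivAt_cosh y)).sub (Real.hasDerivAt_sinh y)
      rw [hd.deriv]
      have : 0 ≤ Real.sinh y := by positivity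
      nlinarith
  have := h (Set.self_mem_Ici) (Set.mem_Ici.2 hx) hx
  simpa using this

lemma log_div_le (a b : ℝ) (hb : 0 < b) (hab : b ≤ a) :
    2*a*b*(Real.log a - Real.log b) ≤ a^2 - b^2 := by
  have ha : 0 < a := hb.trans_le hab
  have h1 : (1:ℝ) ≤ a/b := (one_le_div hb).2 hab
  have hl : 0 ≤ Real.log (a/b) := Real.log_nonneg h1
  have h := Real.self_le_sinh_iff.2 hl
  rw [Real.sinh_eq, Real.exp_log (by positivity), Real.exp_neg,
    Real.exp_log (by positivity), Real.log_div ha.ne' hb.ne'] at h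
  have e : (a/b - (a/b)⁻¹)/2 = (a^2 - b^2)/(2*a*b) := by field_simp
  rw [e] at h
  have := mul_le_mul_of_nonneg_left h (by positivity : (0:ℝ) ≤ 2*a*b)
  calc 2*a*b*(Real.log a - Real.log b) ≤ 2*a*b*((a^2 - b^2)/(2*a*b)) := this
    _ = a^2 - b^2 := by field_simp

lemma log_div_ge (a b : ℝ) (hb : 0 < b) (hab : b ≤ a) :
    2*(a-b) ≤ (a+b)*(Real.log a - Real.log b) := by
  have ha : 0 < a := hb.trans_le hab
  set s := Real.sqrt (a/b) with hs
  have hdiv : (0:ℝ) < a/b := by positivity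
  have hs2 : s^2 = a/b := Real.sq_sqrt hdiv.le
  have hs1 : (1:ℝ) ≤ s := by
    rw [hs]
    exact Real.one_le_sqrt.2 ((one_le_div hb).2 hab)
  have hs0 : (0:ℝ) < s := by linarith
  have hu : 0 ≤ Real.log s := Real.log_nonneg hs1
  have h := sinh_le_mul_cosh _ hu
  rw [Real.sinh_eq, Real.cosh_eq, Real.exp_log hs0, Real.exp_neg, Real.exp_log hs0] at h
  have hsinv : s * s⁻¹ = 1 := mul_inv_cancel₀ hs0.ne'
  have key : s^2 - 1 ≤ Real.log s * (s^2 + 1) := by nlinarith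
  have hlog : Real.log a - Real.log b = 2 * Real.log s := by
    rw [hs, Real.log_sqrt hdiv.le, Real.log_div ha.ne' hb.ne']; ring
  rw [hlog]
  have hab2 : a = b * s^2 := by rw [hs2]; field_simp
  nlinarith [key, hb]

lemma step_lhs (m : ℕ) :
    ((m:ℝ)+1) * Real.log ((m:ℝ)+1) - (m:ℝ) * Real.log (m:ℝ) - Real.log ((m:ℝ)+1/2) ≤ 1 := by
  rcases Nat.eq_zero_or_pos m with hm | hm
  · subst hm
    simp only [Nat.cast_zero, zero_add, Real.log_one, mul_zero, zero_mul]
    have h2 : Real.log (1/2 : ℝ) = -Real.log 2 := by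
      rw [one_div, Real.log_inv]
    rw [h2]
    have := Real.log_le_sub_one_of_pos (by norm_num : (0:ℝ) < 2)
    linarith
  · have hM : (1:ℝ) ≤ (m:ℝ) := by exact_mod_cast hm
    set M := (m:ℝ) with hMdef
    have d1 := log_div_le (M+1) (M+1/2) (by linarith) (by linarith)
    have d2 := log_div_le (M+1/2) M (by linarith) (by linarith)
    -- d1 : 2(M+1)(M+1/2)(log(M+1)-log(M+1/2)) ≤ (M+1)^2-(M+1/2)^2 = M+3/4
    -- d2 : 2(M+1/2)M(log(M+1/2)-log M) ≤ (M+1/2)^2-M^2 = M+1/4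
    set LA := Real.log (M+1)
    set LB := Real.log (M+1/2)
    set LC := Real.log M
    have key : (2*M+1) * ((M+1)*LA - M*LC - LB) ≤ 2*M+1 := by nlinarith [d1, d2]
    have hpos : (0:ℝ) < 2*M+1 := by linarith
    nlinarith [key, hpos]

lemma step_rhs (n : ℕ) (hn : 1 ≤ n) :
    (1:ℝ) ≤ ((n:ℝ)+1/2) * (Real.log ((n:ℝ)+1) - Real.log (n:ℝ)) := by
  have hN : (1:ℝ) ≤ (n:ℝ) := by exact_mod_cast hn
  have h := log_div_ge ((n:ℝ)+1) (n:ℝ) (by linarith) (by linarith)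
  nlinarith [h]

noncomputable def ktExpr (n a b : ℕ) : ℝ :=
  (∑ i ∈ range n, Real.log ((i:ℝ)+1))
    - (∑ j ∈ range a, Real.log ((j:ℝ)+1/2))
    - (∑ j ∈ range b, Real.log ((j:ℝ)+1/2))
    + ((a:ℝ) * Real.log (a:ℝ) + (b:ℝ) * Real.log (b:ℝ) - (n:ℝ) * Real.log (n:ℝ))

lemma ktExpr_symm (n a b : ℕ) : ktExpr n a b = ktExpr n b a := by
  unfold ktExpr; ring

lemma kt_step (n : ℕ) (hn : 1 ≤ n) (a b : ℕ) (hab : a + b = n)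
    (IH : ktExpr n a b ≤ (1/2) * Real.log (n:ℝ) + Real.log 2) :
    ktExpr (n+1) a (b+1) ≤ (1/2) * Real.log ((n:ℝ)+1) + Real.log 2 := by
  have hdec : ktExpr (n+1) a (b+1) = ktExpr n a b
      + (Real.log ((n:ℝ)+1) - Real.log ((b:ℝ)+1/2)
        + (((b:ℝ)+1) * Real.log ((b:ℝ)+1) - (b:ℝ) * Real.log (b:ℝ))
        - (((n:ℝ)+1) * Real.log ((n:ℝ)+1) - (n:ℝ) * Real.log (n:ℝ))) := by
    unfold ktExpr
    rw [Finset.sum_range_succ, Finset.sum_range_succ]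
    push_cast
    ring
  rw [hdec]
  have h1 := step_lhs b
  have h2 := step_rhs n hn
  nlinarith [h1, h2]

lemma kt_core : ∀ n : ℕ, 1 ≤ n → ∀ a b : ℕ, a + b = n →
    ktExpr n a b ≤ (1/2) * Real.log (n:ℝ) + Real.log 2 := by
  intro n
  induction n with
  | zero => omega
  | succ n ih =>
    intro _ a b hab
    rcases Nat.eq_zero_or_pos n with hn | hn
    · subst hn
      have hab1 : (a = 0 ∧ b = 1) ∨ (a = 1 ∧ b = 0) := by omega
      have base : ktExpr 1 0 1 ≤ (1/2) * Real.log ((1:ℕ):ℝ) + Real.log 2 := by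
        unfold ktExpr
        simp only [Finset.sum_range_one, Finset.sum_range_zero, Nat.cast_one, Nat.cast_zero]
        rw [show ((0:ℝ)+1/2) = 1/2 by ring, one_div, Real.log_inv]
        simp [Real.log_one]
      rcases hab1 with ⟨ha, hb⟩ | ⟨ha, hb⟩ <;> subst ha <;> subst hb
      · exact base
      · rw [ktExpr_symm]; exact base
    · -- n ≥ 1
      rcases Nat.eq_zero_or_pos b with hb | hb
      · subst hb
        obtain ⟨a', rfl⟩ : ∃ a', a = a' + 1 := ⟨a - 1, by omega⟩
        rw [ktExpr_symm]
        have h := kt_step n hn 0 a' (by omega) (ih hn 0 a' (by omega))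
        push_cast at h ⊢
        exact h
      · obtain ⟨b', rfl⟩ : ∃ b', b = b' + 1 := ⟨b - 1, by omega⟩
        have h := kt_step n hn a b' (by omega) (ih hn a b' (by omega))
        push_cast at h ⊢
        exact h

lemma fin2_cases (a : Fin 2) : a = 0 ∨ a = 1 := by fin_cases a <;> simp

lemma count_succ (x : ℕ → Fin 2) (n : ℕ) (y : Fin 2) :
    ((range (n+1)).filter (fun j => x j = y)).card
      = ((range n).filter (fun j => x j = y)).card + (if x n = y then 1 else 0) := by
  rw [Finset.range_add_one, Finset.filter_insert]
  split
  · rw [Finset.card_insert_of_notMem (by simp)]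
  · simp

lemma sum_log_count (x : ℕ → Fin 2) (t : ℕ) :
    ∑ i ∈ range t, Real.log (((((range i).filter (fun j => x j = x i)).card : ℝ)) + 1/2)
      = ∑ y : Fin 2, ∑ j ∈ range (((range t).filter (fun j => x j = y)).card),
          Real.log ((j:ℝ) + 1/2) := by
  induction t with
  | zero => simp
  | succ n ih =>
    rw [Finset.sum_range_succ, ih, Fin.sum_univ_two, Fin.sum_univ_two,
      count_succ, count_succ]
    rcases fin2_cases (x n) with h | h <;> rw [h] <;>
      simp only [if_pos rfl, show ((1:Fin 2) = 0) = False by simp,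
        show ((0:Fin 2) = 1) = False by simp, if_false, if_true, add_zero] <;>
      rw [Finset.sum_range_succ] <;> ring

lemma sum_comp_count (x : ℕ → Fin 2) (t : ℕ) (g : Fin 2 → ℝ) :
    ∑ i ∈ range t, g (x i)
      = ∑ y : Fin 2, (((range t).filter (fun j => x j = y)).card : ℝ) * g y := by
  induction t with
  | zero => simp
  | succ n ih =>
    rw [Finset.sum_range_succ, ih, Fin.sum_univ_two, Fin.sum_univ_two,
      count_succ, count_succ]
    rcases fin2_cases (x n) with h | h <;> rw [h] <;> push_cast <;> simp <;> ring

lemma count_total (x : ℕ → Fin 2) (t : ℕ) :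
    ((range t).filter (fun j => x j = 0)).card + ((range t).filter (fun j => x j = 1)).card = t := by
  induction t with
  | zero => simp
  | succ n ih =>
    rw [count_succ, count_succ]
    rcases fin2_cases (x n) with h | h <;> rw [h] <;> simp <;> omega

lemma gibbs_term (c q T : ℝ) (hc : 0 ≤ c) (hq : 0 < q) (hT : 0 < T) :
    c * Real.log q ≤ c * Real.log c - c * Real.log T + T * q - c := by
  rcases eq_or_lt_of_le hc with hc0 | hc0
  · subst hc0
    simp
    positivity
  · have key : Real.log q - Real.log c + Real.log T ≤ T * q / c - 1 := by
      have h1 : Real.log (q * T / c) ≤ q * T / c - 1 :=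
        Real.log_le_sub_one_of_pos (by positivity)
      rw [Real.log_div (by positivity) hc0.ne', Real.log_mul hq.ne' hT.ne'] at h1
      calc Real.log q - Real.log c + Real.log T = Real.log q + Real.log T - Real.log c := by ring
        _ ≤ q * T / c - 1 := h1
        _ = T * q / c - 1 := by ring
    have := mul_le_mul_of_nonneg_left key hc0.le
    rw [mul_sub, mul_div_cancel₀] at this
    · nlinarith
    · exact hc0.ne'

/-- Regret bound for the Krichevsky–Trofimov (add-1/2) estimator on a binary alphabet:
for every `t ≥ 1`, every sequence `x : ℕ → Fin 2` and every distribution `q` on `{0,1}`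
(positive distributions suffice to witness the supremum), the cumulative log-loss regret
is at most `(1/2)·log t + 1`.  Here `q̂_{i+1}(y) = (N_i(y) + 1/2)/(i + 1)` where `N_i(y)`
is the number of occurrences of `y` among `x_0, …, x_{i-1}`. -/
theorem kt_regret_binary (t : ℕ) (ht : 1 ≤ t) (x : ℕ → Fin 2)
    (q : Fin 2 → ℝ) (hqpos : ∀ y, 0 < q y) (hqsum : ∑ y, q y = 1) :
    ∑ i ∈ Finset.range t,
        (Real.log (1 / ((((Finset.range i).filter (fun j => x j = x i)).card + 1/2) / (i + 1)))
          - Real.log (1 / q (x i)))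
      ≤ (1/2) * Real.log t + 1 := by
  have hterm : ∀ i ∈ range t,
      Real.log (1 / (((((range i).filter (fun j => x j = x i)).card : ℝ) + 1/2) / ((i:ℝ) + 1)))
          - Real.log (1 / q (x i))
        = (Real.log ((i:ℝ)+1)
            - Real.log (((((range i).filter (fun j => x j = x i)).card : ℝ)) + 1/2))
          + Real.log (q (x i)) := by
    intro i _
    have hN : (0:ℝ) < ((((range i).filter (fun j => x j = x i)).card : ℝ)) + 1/2 := by positivity
    have hi : (0:ℝ) < (i:ℝ) + 1 := by positivity
    rw [one_div_div, Real.log_div hi.ne' hN.ne',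
      Real.log_div one_ne_zero (hqpos (x i)).ne', Real.log_one]
    ring
  rw [Finset.sum_congr rfl hterm, Finset.sum_add_distrib, Finset.sum_sub_distrib,
    sum_log_count x t, sum_comp_count x t (fun y => Real.log (q y)), Fin.sum_univ_two,
    Fin.sum_univ_two]
  set a := ((range t).filter (fun j => x j = 0)).card with ha
  set b := ((range t).filter (fun j => x j = 1)).card with hb
  have hab : a + b = t := count_total x t
  have hcast : (a:ℝ) + (b:ℝ) = (t:ℝ) := by exact_mod_cast hab
  have hT : (0:ℝ) < t := by
    have : (1:ℝ) ≤ (t:ℝ) := by exact_mod_cast ht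
    linarith
  have hq01 : q 0 + q 1 = 1 := by rw [← hqsum, Fin.sum_univ_two]
  have g0 := gibbs_term (a:ℝ) (q 0) (t:ℝ) (by positivity) (hqpos 0) hT
  have g1 := gibbs_term (b:ℝ) (q 1) (t:ℝ) (by positivity) (hqpos 1) hT
  have hcore := kt_core t ht a b hab
  unfold ktExpr at hcore
  have hlog2 : Real.log 2 ≤ 1 := by
    have := Real.log_le_sub_one_of_pos (by norm_num : (0:ℝ) < 2)
    linarith
  have hsum : (a:ℝ)*Real.log (t:ℝ) + (b:ℝ)*Real.log (t:ℝ) = (t:ℝ)*Real.log (t:ℝ) := by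
    rw [← add_mul, hcast]
  linarith [g0, g1, hcore, hlog2, hsum, mul_le_mul_of_nonneg_left hq01.le hT.le]
end

section
/- Let P be an m×m stochastic matrix whose eigenvalue 1 is simple and all other eigenvalues have modulus strictly less than 1, with stationary distribution π, and let θ : [m] → ℝ be any function. Then the linear system (P − I)ω = −(P − Jπᵀ)θ, πᵀω = 0 (where J is the all-ones column vector) has a unique solution ω : [m] → ℝ. -/
open Polynomial Matrix

/-! Here `replicateRow n π` is `J πᵀ`; let `A = 1 - P + J πᵀ`. Stationarity gives `πᵀ A = πᵀ` and
`πᵀ (P - J πᵀ) = 0`, so the system is equivalent to the single equation `A ω = (P - J πᵀ) θ`, the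
constraint `πᵀ ω = 0` then being automatic. `A` is invertible: `A x = 0` forces `πᵀ x = 0` and then
`P x = x`; as `1` is a simple eigenvalue, its eigenspace is the line through the constant vector
`1`, on which `πᵀ` does not vanish, so `x = 0`. -/

theorem Matrix.rootMultiplicity_charpoly_map {n R S : Type*} [Fintype n] [DecidableEq n]
    [CommRing R] [CommRing S] {f : R →+* S} (hf : Function.Injective f) (M : Matrix n n R)
    (a : R) : (M.map f).charpoly.rootMultiplicity (f a) = M.charpoly.rootMultiplicity a := by
  rw [charpoly_map, ← eq_rootMultiplicity_map hf]

theorem Submodule.eq_zero_of_finrank_le_one {K V : Type*} [Field K] [AddCommGroup V]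
    [Module K V] [FiniteDimensional K V] {S : Submodule K V} (hS : Module.finrank K S ≤ 1)
    (f : V →ₗ[K] K) {u x : V} (hu : u ∈ S) (hx : x ∈ S) (hfu : f u ≠ 0) (hfx : f x = 0) :
    x = 0 := by
  have hu0 : u ≠ 0 := by rintro rfl; exact hfu (map_zero f)
  have hspan : K ∙ u = S := by
    refine eq_of_le_of_finrank_le ((span_singleton_le_iff_mem u S).2 hu) ?_
    rwa [finrank_span_singleton hu0]
  obtain ⟨c, rfl⟩ := mem_span_singleton.1 (hspan ▸ hx)
  rw [map_smul, smul_eq_mul, mul_eq_zero] at hfx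
  rw [hfx.resolve_right hfu, zero_smul]

theorem Matrix.vecMul_replicateRow {R n : Type*} [Semiring R] [Fintype n] (v w : n → R) :
    v ᵥ* replicateRow n w = (v ⬝ᵥ 1) • w := by
  rw [← one_vecMulVec, vecMul_vecMulVec]

theorem Matrix.replicateRow_mulVec_eq_zero {R n : Type*} [Semiring R] [Fintype n] {v x : n → R}
    (hvx : v ⬝ᵥ x = 0) : replicateRow n v *ᵥ x = 0 := by
  rw [replicateRow_mulVec_eq_const, hvx, Function.const_zero]

section StochasticMatrix

variable {K n : Type*} [Field K] [Fintype n] {P : Matrix n n K} {π : n → K}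

theorem Matrix.eq_zero_of_mulVec_eq_self [DecidableEq n] (hrow : P *ᵥ 1 = 1) (hπ : π ⬝ᵥ 1 ≠ 0)
    (hsimple : P.charpoly.rootMultiplicity 1 ≤ 1) {x : n → K} (hx : P *ᵥ x = x)
    (hπx : π ⬝ᵥ x = 0) : x = 0 := by
  have hfix {v : n → K} (hv : P *ᵥ v = v) : v ∈ Module.End.eigenspace P.mulVecLin 1 := by
    rwa [Module.End.mem_eigenspace_iff, one_smul]
  refine Submodule.eq_zero_of_finrank_le_one ?_ (dotProductBilin K K π) (hfix hrow) (hfix hx)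
    hπ hπx
  exact (LinearMap.finrank_eigenspace_le _ 1).trans (by rwa [charpoly_mulVecLin])

theorem Matrix.vecMul_one_sub_add_replicateRow [DecidableEq n] (hstat : π ᵥ* P = π)
    (hπ : π ⬝ᵥ 1 = 1) : π ᵥ* (1 - P + replicateRow n π) = π := by
  rw [vecMul_add, vecMul_sub, vecMul_one, hstat, vecMul_replicateRow, hπ, one_smul, sub_self,
    zero_add]

theorem Matrix.vecMul_sub_replicateRow (hstat : π ᵥ* P = π) (hπ : π ⬝ᵥ 1 = 1) :
    π ᵥ* (P - replicateRow n π) = 0 := by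
  rw [vecMul_sub, hstat, vecMul_replicateRow, hπ, one_smul, sub_self]

theorem Matrix.one_sub_add_replicateRow_mulVec [DecidableEq n] (x : n → K) :
    (1 - P + replicateRow n π) *ᵥ x = -((P - 1) *ᵥ x) + replicateRow n π *ᵥ x := by
  rw [add_mulVec, ← neg_sub, neg_mulVec]

theorem Matrix.mulVec_injective_one_sub_add_replicateRow [DecidableEq n] (hrow : P *ᵥ 1 = 1)
    (hstat : π ᵥ* P = π) (hπ : π ⬝ᵥ 1 = 1) (hsimple : P.charpoly.rootMultiplicity 1 ≤ 1) :
    Function.Injective (1 - P + replicateRow n π).mulVec := by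
  refine (injective_iff_map_eq_zero (1 - P + replicateRow n π).mulVecLin).2 fun x hx => ?_
  have hπx : π ⬝ᵥ x = 0 := by
    rw [← vecMul_one_sub_add_replicateRow hstat hπ, ← dotProduct_mulVec]
    exact (congrArg (π ⬝ᵥ ·) hx).trans (dotProduct_zero π)
  have hPx : P *ᵥ x = x := by
    rwa [mulVecLin_apply, one_sub_add_replicateRow_mulVec, replicateRow_mulVec_eq_zero hπx,
      add_zero, neg_eq_zero, sub_mulVec, one_mulVec, sub_eq_zero] at hx
  exact eq_zero_of_mulVec_eq_self hrow (hπ ▸ one_ne_zero) hsimple hPx hπx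

theorem Matrix.poisson_system_iff [DecidableEq n] (hstat : π ᵥ* P = π) (hπ : π ⬝ᵥ 1 = 1)
    (θ ω : n → K) :
    ((P - 1) *ᵥ ω = -((P - replicateRow n π) *ᵥ θ) ∧ π ⬝ᵥ ω = 0) ↔
      (1 - P + replicateRow n π) *ᵥ ω = (P - replicateRow n π) *ᵥ θ := by
  constructor
  · rintro ⟨hω, hπω⟩
    rw [one_sub_add_replicateRow_mulVec, hω, neg_neg, replicateRow_mulVec_eq_zero hπω, add_zero]
  · intro hω
    have hπω : π ⬝ᵥ ω = 0 := by
      rw [← vecMul_one_sub_add_replicateRow hstat hπ, ← dotProduct_mulVec, hω, dotProduct_mulVec,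
        vecMul_sub_replicateRow hstat hπ, zero_dotProduct]
    rw [one_sub_add_replicateRow_mulVec, replicateRow_mulVec_eq_zero hπω, add_zero] at hω
    exact ⟨neg_eq_iff_eq_neg.1 hω, hπω⟩

end StochasticMatrix

theorem poisson_equation_unique_solution_general (m : ℕ)
    (P : Matrix (Fin m) (Fin m) ℝ) (π θ : Fin m → ℝ)
    (hProw : ∀ i, ∑ j, P i j = 1)
    -- eigenvalue 1 is simple: it is a root of the characteristic polynomial of
    -- (algebraic) multiplicity exactly one
    (hsimple : Polynomial.rootMultiplicity (1 : ℂ)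
      (Matrix.charpoly (P.map (Complex.ofReal : ℝ → ℂ))) = 1)
    (hπsum : ∑ i, π i = 1)
    (hstat : ∀ j, ∑ i, π i * P i j = π j) :
    ∃! ω : Fin m → ℝ,
      (P - 1).mulVec ω = -((P - Matrix.of fun _ j => π j).mulVec θ) ∧
        ∑ i, π i * ω i = 0 := by
  have hrow : P *ᵥ 1 = 1 := funext fun i => by simpa [mulVec, dotProduct] using hProw i
  have hπ : π ⬝ᵥ 1 = 1 := by simpa [dotProduct] using hπsum
  have hsimpleℝ : P.charpoly.rootMultiplicity 1 ≤ 1 := by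
    rw [← hsimple, ← map_one Complex.ofRealHom]
    exact (rootMultiplicity_charpoly_map Complex.ofRealHom.injective P 1).ge
  have hinj := mulVec_injective_one_sub_add_replicateRow hrow (funext hstat) hπ hsimpleℝ
  have hbij : Function.Bijective (1 - P + replicateRow (Fin m) π).mulVec :=
    ⟨hinj, mulVec_surjective_iff_isUnit.2 (mulVec_injective_iff_isUnit.1 hinj)⟩
  exact (existsUnique_congr (poisson_system_iff (funext hstat) hπ θ)).2 (hbij.existsUnique _)

/-- The discrete Poisson equation underlying the Markov version of Wald's identity: if `P` is a
stochastic matrix whose eigenvalue `1` is simple (algebraic multiplicity one) and whose other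
eigenvalues have modulus strictly less than one, with stationary distribution `π`, then for any
`θ : Fin m → ℝ` the system `(P − I) ω = −(P − J πᵀ) θ`, `πᵀ ω = 0` has a unique solution. -/
theorem poisson_equation_unique_solution (m : ℕ)
    (P : Matrix (Fin m) (Fin m) ℝ) (π θ : Fin m → ℝ)
    (hPnn : ∀ i j, 0 ≤ P i j) (hProw : ∀ i, ∑ j, P i j = 1)
    -- eigenvalue 1 is simple: it is a root of the characteristic polynomial of
    -- (algebraic) multiplicity exactly one
    (hsimple : Polynomial.rootMultiplicity (1 : ℂ)
      (Matrix.charpoly (P.map (Complex.ofReal : ℝ → ℂ))) = 1)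
    -- all other eigenvalues have modulus strictly less than 1
    (hspec : ∀ z : ℂ, (Matrix.charpoly (P.map (Complex.ofReal : ℝ → ℂ))).IsRoot z →
      z ≠ 1 → ‖z‖ < 1)
    (hπnn : ∀ i, 0 ≤ π i) (hπsum : ∑ i, π i = 1)
    (hstat : ∀ j, ∑ i, π i * P i j = π j) :
    ∃! ω : Fin m → ℝ,
      (P - 1).mulVec ω = -((P - Matrix.of fun _ j => π j).mulVec θ) ∧
        ∑ i, π i * ω i = 0 :=
  poisson_equation_unique_solution_general m P π θ hProw hsimple hπsum hstat
end

section
/- Let p, q be probability distributions on a finite alphabet with p strictly positive, and let q̂_t denote the KT estimator built from i.i.d. samples X_1, X_2, ... drawn from q. If q ≠ p, then almost surely the likelihood ratio process L_t = ∏_{i=1}^t q̂_i(X_i)/p(X_i) tends to infinity, and hence for every α ∈ (0,1) the stopping time τ = inf{t : L_t ≥ 1/α} is finite almost surely (the test has power one). -/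
open MeasureTheory Finset ProbabilityTheory

/-!
Write `N t x` for the number of occurrences of `x` among the first `t` samples. Regrouping the
product by symbols, the KT likelihood is `∏ₓ (1/2)(3/2)⋯(N t x - 1/2)` divided by
`(m/2)(m/2 + 1)⋯(m/2 + t - 1) · ∏ₓ p(x) ^ N t x`. A Wallis-type bound for the numerator, the
harmonic series for the denominator and the multinomial theorem give the deterministic estimate
`log L t ≥ t · D(N t / t ‖ p) - m log t - O(1)`. By the strong law of large numbers `N t / t → q`
almost surely, and `D(q ‖ p) > 0` since `q ≠ p`, so `log L t` grows linearly in `t`.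
-/

namespace KTTest

open Filter Real Topology InformationTheory
open scoped Nat

variable {α : Type*}

section Counting

variable [DecidableEq α]

def count (a : ℕ → α) (t : ℕ) (x : α) : ℕ := #{j ∈ range t | a j = x}

lemma count_succ (a : ℕ → α) (t : ℕ) (x : α) :
    count a (t + 1) x = count a t x + if a t = x then 1 else 0 := by
  simp only [count, card_filter, sum_range_succ]

lemma count_le (a : ℕ → α) (t : ℕ) (x : α) : count a t x ≤ t :=
  (card_filter_le _ _).trans (card_range t).le

variable [Fintype α]

lemma sum_count (a : ℕ → α) (t : ℕ) : ∑ x, count a t x = t := by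
  simpa [count] using (card_eq_sum_card_fiberwise (s := range t) (t := univ) (f := a)
    fun j _ => mem_univ (a j)).symm

lemma prod_range_comp_eq_prod_pow_count {M : Type*} [CommMonoid M] (a : ℕ → α) (g : α → M)
    (t : ℕ) : ∏ i ∈ range t, g (a i) = ∏ x, g x ^ count a t x := by
  rw [← prod_fiberwise' (range t) a g]
  exact prod_congr rfl fun x _ => prod_const _

lemma prod_range_count_self {M : Type*} [CommMonoid M] (a : ℕ → α) (f : ℕ → M) (t : ℕ) :
    ∏ i ∈ range t, f (count a i (a i)) = ∏ x, ∏ k ∈ range (count a t x), f k := by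
  induction t with
  | zero => simp [count]
  | succ t ih =>
    have hsucc : ∀ x, ∏ k ∈ range (count a (t + 1) x), f k
        = (∏ k ∈ range (count a t x), f k) * if a t = x then f (count a t x) else 1 := by
      intro x
      rw [count_succ]
      split_ifs <;> simp [prod_range_succ]
    simp only [hsucc, prod_mul_distrib, prod_ite_eq, mem_univ, if_true, prod_range_succ, ih]

end Counting

noncomputable def ktNumerator (n : ℕ) : ℝ := ∏ k ∈ range n, ((k : ℝ) + 1 / 2)

lemma ktNumerator_pos (n : ℕ) : 0 < ktNumerator n := prod_pos fun k _ => by positivity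

lemma factorial_sq_le_four_mul_ktNumerator_sq {n : ℕ} (hn : 1 ≤ n) :
    (n ! : ℝ) ^ 2 ≤ 4 * n * ktNumerator n ^ 2 := by
  induction n, hn using Nat.le_induction with
  | base => norm_num [ktNumerator]
  | succ n hn ih =>
    have hn' : (1 : ℝ) ≤ n := by exact_mod_cast hn
    rw [ktNumerator, prod_range_succ, ← ktNumerator, Nat.factorial_succ]
    push_cast
    nlinarith [mul_le_mul_of_nonneg_left ih (by positivity : (0 : ℝ) ≤ ((n : ℝ) + 1) ^ 2),
      mul_nonneg (sq_nonneg (ktNumerator n)) (by linarith : (0 : ℝ) ≤ n)]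

lemma log_factorial_le_log_ktNumerator (n : ℕ) :
    log n ! ≤ log (ktNumerator n) + log 2 + log n / 2 := by
  rcases Nat.eq_zero_or_pos n with rfl | hn
  · simp [ktNumerator, log_nonneg one_le_two]
  · have h := log_le_log (by positivity) (factorial_sq_le_four_mul_ktNumerator_sq hn)
    rw [log_pow, log_mul (by positivity) (pow_ne_zero 2 (ktNumerator_pos n).ne'),
      log_mul (by norm_num) (by positivity), log_pow, show (4 : ℝ) = 2 ^ 2 by norm_num,
      log_pow] at h
    push_cast at h
    linarith

lemma log_prod_range_add_le {c : ℝ} (hc : 0 < c) (t : ℕ) :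
    log (∏ i ∈ range t, ((i : ℝ) + c)) ≤ log t ! + c * (1 + log t) := by
  have hterm (i : ℕ) : log ((i : ℝ) + c) ≤ log ((i : ℝ) + 1) + c * ((i : ℝ) + 1)⁻¹ := by
    have h := log_le_sub_one_of_pos (x := ((i : ℝ) + c) / (i + 1)) (by positivity)
    rw [log_div (by positivity) (by positivity), div_sub_one (by positivity)] at h
    have : (i + c - (i + 1)) / ((i : ℝ) + 1) ≤ c * ((i : ℝ) + 1)⁻¹ := by
      rw [← div_eq_mul_inv]; gcongr; linarith
    linarith
  have hfac : log (t ! : ℝ) = ∑ i ∈ range t, log ((i : ℝ) + 1) := by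
    rw [← prod_range_add_one_eq_factorial, Nat.cast_prod,
      log_prod fun i _ => by positivity]
    push_cast; rfl
  have hharm : (harmonic t : ℝ) = ∑ i ∈ range t, ((i : ℝ) + 1)⁻¹ := by
    simp [harmonic]
  calc log (∏ i ∈ range t, ((i : ℝ) + c))
      = ∑ i ∈ range t, log ((i : ℝ) + c) := log_prod fun i _ => by positivity
    _ ≤ ∑ i ∈ range t, (log ((i : ℝ) + 1) + c * ((i : ℝ) + 1)⁻¹) := sum_le_sum fun i _ => hterm i
    _ = log t ! + c * harmonic t := by rw [sum_add_distrib, ← mul_sum, hfac, hharm]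
    _ ≤ log t ! + c * (1 + log t) := by gcongr; exact harmonic_le_one_add_log t

lemma multinomial_mul_prod_pow_self_le [Fintype α] (N : α → ℕ) :
    Nat.multinomial univ N * ∏ x, N x ^ N x ≤ (∑ x, N x) ^ ∑ x, N x := by
  classical
  rw [sum_pow_eq_sum_piAntidiag univ N]
  exact single_le_sum (f := fun k => Nat.multinomial univ k * ∏ x, N x ^ k x)
    (fun _ _ => Nat.zero_le _) (by simp)

lemma log_factorial_sum_sub_le [Fintype α] (N : α → ℕ) :
    log (∑ x, N x)! - ∑ x, log (N x)! ≤ (∑ x, N x) * log (∑ x, N x) - ∑ x, N x * log (N x) := by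
  have hpos : 0 < Nat.multinomial univ N := Nat.multinomial_pos _ _
  have hspec : log (∑ x, N x)! = ∑ x, log (N x)! + log (Nat.multinomial univ N) := by
    rw [← Nat.multinomial_spec, Nat.cast_mul, Nat.cast_prod,
      log_mul (by positivity) (by positivity), log_prod fun x _ => by positivity]
  have hle := log_le_log
    (by exact_mod_cast Nat.mul_pos hpos (prod_pos fun x _ => Nat.pow_self_pos))
    (Nat.cast_le (α := ℝ).2 (multinomial_mul_prod_pow_self_le N))
  rw [Nat.cast_mul, Nat.cast_prod, log_mul (by positivity)
      (prod_ne_zero_iff.2 fun x _ => by exact_mod_cast Nat.pow_self_pos.ne'),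
    log_prod fun x _ => by exact_mod_cast Nat.pow_self_pos.ne'] at hle
  push_cast at hle
  simp only [log_pow] at hle
  linarith

section RelEntropy

variable [Fintype α]

/-- `Real.log 0 = 0` makes the terms with `q x = 0` vanish, as in the convention `0 log 0 = 0`. -/
noncomputable def relEntropy (q p : α → ℝ) : ℝ := ∑ x, q x * log (q x / p x)

lemma relEntropy_eq_sum_mul_klFun {q p : α → ℝ} (hp : ∀ x, p x ≠ 0)
    (hsum : ∑ x, q x = ∑ x, p x) : relEntropy q p = ∑ x, p x * klFun (q x / p x) := by
  have hterm (x : α) : p x * klFun (q x / p x) = q x * log (q x / p x) + p x - q x := by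
    rw [klFun, mul_sub, mul_add, ← mul_assoc, mul_div_cancel₀ _ (hp x), mul_one]
  rw [sum_congr rfl fun x _ => hterm x, sum_sub_distrib, sum_add_distrib, relEntropy, hsum]
  ring

lemma relEntropy_pos {q p : α → ℝ} (hq : ∀ x, 0 ≤ q x) (hp : ∀ x, 0 < p x)
    (hsum : ∑ x, q x = ∑ x, p x) (hqp : q ≠ p) : 0 < relEntropy q p := by
  rw [relEntropy_eq_sum_mul_klFun (fun x => (hp x).ne') hsum]
  obtain ⟨x, hx⟩ := Function.ne_iff.1 hqp
  have hnonneg (y : α) : 0 ≤ q y / p y := div_nonneg (hq y) (hp y).le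
  refine sum_pos' (fun y _ => mul_nonneg (hp y).le (klFun_nonneg (hnonneg y)))
    ⟨x, mem_univ x, mul_pos (hp x) ?_⟩
  refine (klFun_nonneg (hnonneg x)).lt_of_ne' fun h => hx ?_
  rw [klFun_eq_zero_iff (hnonneg x), div_eq_one_iff_eq (hp x).ne'] at h
  exact h

lemma continuous_relEntropy {p : α → ℝ} (hp : ∀ x, p x ≠ 0) :
    Continuous fun q => relEntropy q p := by
  have h (q : α → ℝ) : relEntropy q p = ∑ x, p x * (q x / p x * log (q x / p x)) := by
    refine sum_congr rfl fun x _ => ?_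
    rw [← mul_assoc, mul_div_cancel₀ _ (hp x)]
  simp only [h]
  exact continuous_finsetSum _ fun x _ =>
    continuous_const.mul (continuous_mul_log.comp ((continuous_apply x).div_const _))

end RelEntropy

lemma tendsto_atTop_of_mul_sub_log_le {f g : ℕ → ℝ} {D c C : ℝ} (hD : 0 < D)
    (hg : Tendsto g atTop (𝓝 D)) (hf : ∀ᶠ t in atTop, t * g t - c * log t - C ≤ f t) :
    Tendsto f atTop atTop := by
  have hlog : Tendsto (fun t : ℕ => log t / t) atTop (𝓝 0) :=
    isLittleO_log_id_atTop.tendsto_div_nhds_zero.comp tendsto_natCast_atTop_atTop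
  have hrate : Tendsto (fun t : ℕ => g t - (c * (log t / t) + C / t)) atTop (𝓝 D) := by
    simpa using hg.sub ((hlog.const_mul c).add (tendsto_const_div_atTop_nhds_zero_nat C))
  refine tendsto_atTop_mono' _ ?_ (tendsto_natCast_atTop_atTop.atTop_mul_pos hD hrate)
  filter_upwards [hf, eventually_ne_atTop 0] with t ht ht0
  have : (t : ℝ) ≠ 0 := by exact_mod_cast ht0
  calc (t : ℝ) * (g t - (c * (log t / t) + C / t)) = t * g t - c * log t - C := by
        field_simp; ring
    _ ≤ f t := ht

section Likelihood

variable [DecidableEq α]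

noncomputable def empirical (a : ℕ → α) (t : ℕ) (x : α) : ℝ := count a t x / t

variable [Fintype α]

noncomputable def ktEstimate (a : ℕ → α) (t : ℕ) (x : α) : ℝ :=
  (count a t x + 1 / 2) / (t + Fintype.card α / 2)

noncomputable def ktLikelihood (a : ℕ → α) (p : α → ℝ) (t : ℕ) : ℝ :=
  ∏ i ∈ range t, ktEstimate a i (a i) / p (a i)

lemma ktLikelihood_pos (a : ℕ → α) {p : α → ℝ} (hp : ∀ x, 0 < p x) (t : ℕ) :
    0 < ktLikelihood a p t := by
  have : 0 < Fintype.card α := Fintype.card_pos_iff.2 ⟨a 0⟩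
  exact prod_pos fun i _ => div_pos (div_pos (by positivity) (by positivity)) (hp _)

lemma ktLikelihood_eq (a : ℕ → α) (p : α → ℝ) (t : ℕ) :
    ktLikelihood a p t = (∏ x, ktNumerator (count a t x)) /
      ((∏ i ∈ range t, ((i : ℝ) + Fintype.card α / 2)) * ∏ x, p x ^ count a t x) := by
  rw [ktLikelihood, prod_div_distrib, ← prod_range_comp_eq_prod_pow_count a p]
  simp only [ktEstimate, prod_div_distrib, div_div]
  rw [prod_range_count_self a (fun k => (k : ℝ) + 1 / 2)]
  rfl

lemma natCast_mul_relEntropy_empirical (a : ℕ → α) {p : α → ℝ} (hp : ∀ x, p x ≠ 0) (t : ℕ) :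
    t * relEntropy (empirical a t) p
      = ∑ x, count a t x * log (count a t x) - t * log t - ∑ x, count a t x * log (p x) := by
  have hterm (x : α) : t * (empirical a t x * log (empirical a t x / p x))
      = count a t x * log (count a t x) - count a t x * log t - count a t x * log (p x) := by
    rcases Nat.eq_zero_or_pos (count a t x) with h | h
    · simp [empirical, h]
    have ht : (t : ℝ) ≠ 0 := by exact_mod_cast (h.trans_le (count_le a t x)).ne'
    rw [empirical, log_div (by positivity) (hp x), log_div (by positivity) ht]
    field_simp
  have hsum : ∑ x, (count a t x : ℝ) = t := by exact_mod_cast sum_count a t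
  rw [relEntropy, mul_sum, sum_congr rfl fun x _ => hterm x, sum_sub_distrib, sum_sub_distrib,
    ← sum_mul, hsum]

lemma le_log_ktLikelihood (a : ℕ → α) {p : α → ℝ} (hp : ∀ x, 0 < p x) (t : ℕ) :
    t * relEntropy (empirical a t) p - Fintype.card α * log t - Fintype.card α * (log 2 + 1 / 2)
      ≤ log (ktLikelihood a p t) := by
  have hcard : (0 : ℝ) < Fintype.card α := by exact_mod_cast Fintype.card_pos_iff.2 ⟨a 0⟩
  have hnum (x : α) :
      log (count a t x)! ≤ log (ktNumerator (count a t x)) + log 2 + log t / 2 := by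
    have : log (count a t x) ≤ log t := by
      rcases Nat.eq_zero_or_pos (count a t x) with h | h
      · simp [h, log_natCast_nonneg]
      · exact log_le_log (by exact_mod_cast h) (by exact_mod_cast count_le a t x)
    linarith [log_factorial_le_log_ktNumerator (count a t x)]
  have hden := log_prod_range_add_le (c := Fintype.card α / 2) (by positivity) t
  have hmult := log_factorial_sum_sub_le (count a t)
  simp only [← Nat.cast_sum, sum_count] at hmult
  have hnum' := sum_le_sum fun x (_ : x ∈ univ) => hnum x
  simp only [sum_add_distrib, sum_const, card_univ, nsmul_eq_mul] at hnum'
  have hden_pos : 0 < ∏ i ∈ range t, ((i : ℝ) + Fintype.card α / 2) :=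
    prod_pos fun i _ => by positivity
  have hpow_pos : 0 < ∏ x, p x ^ count a t x := prod_pos fun x _ => pow_pos (hp x) _
  rw [natCast_mul_relEntropy_empirical a (fun x => (hp x).ne'), ktLikelihood_eq,
    log_div (prod_ne_zero_iff.2 fun x _ => (ktNumerator_pos _).ne')
      (mul_pos hden_pos hpow_pos).ne',
    log_mul hden_pos.ne' hpow_pos.ne', log_prod fun x _ => (ktNumerator_pos _).ne',
    log_prod fun x _ => (pow_pos (hp x) _).ne']
  simp only [log_pow]
  linarith

theorem tendsto_ktLikelihood_atTop {a : ℕ → α} {q p : α → ℝ} (hq : ∀ x, 0 ≤ q x)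
    (hp : ∀ x, 0 < p x) (hsum : ∑ x, q x = ∑ x, p x) (hqp : q ≠ p)
    (hfreq : Tendsto (empirical a) atTop (𝓝 q)) : Tendsto (ktLikelihood a p) atTop atTop := by
  have hD : Tendsto (fun t => relEntropy (empirical a t) p) atTop (𝓝 (relEntropy q p)) :=
    ((continuous_relEntropy fun x => (hp x).ne').tendsto q).comp hfreq
  have hlog : Tendsto (fun t => log (ktLikelihood a p t)) atTop atTop :=
    tendsto_atTop_of_mul_sub_log_le (relEntropy_pos hq hp hsum hqp) hD
      (Eventually.of_forall (le_log_ktLikelihood a hp))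
  exact tendsto_atTop_mono (fun t => log_le_self (ktLikelihood_pos a hp t).le) hlog

end Likelihood

theorem tendsto_empirical_ae {Ω : Type*} {m0 : MeasurableSpace Ω} {μ : Measure Ω}
    [IsProbabilityMeasure μ] [MeasurableSpace α] [MeasurableSingletonClass α] [Countable α]
    [DecidableEq α] {X : ℕ → Ω → α} (hX : ∀ n, Measurable (X n))
    (hindep : Pairwise (Function.onFun (· ⟂ᵢ[μ] ·) X)) {q : α → ℝ}
    (hdist : ∀ n x, (μ {ω | X n ω = x}).toReal = q x) :
    ∀ᵐ ω ∂μ, Tendsto (empirical (X · ω)) atTop (𝓝 q) := by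
  have hident (n : ℕ) : IdentDistrib (X n) (X 0) μ μ := by
    refine ⟨(hX n).aemeasurable, (hX 0).aemeasurable, Measure.ext_of_singleton fun x => ?_⟩
    rw [Measure.map_apply (hX n) (measurableSet_singleton x),
      Measure.map_apply (hX 0) (measurableSet_singleton x),
      ← ENNReal.toReal_eq_toReal_iff' (measure_ne_top μ _) (measure_ne_top μ _)]
    exact (hdist n x).trans (hdist 0 x).symm
  simp only [tendsto_pi_nhds]
  refine ae_all_iff.2 fun x => ?_
  set g : α → ℝ := fun y => if y = x then 1 else 0
  have hg : Measurable g := measurable_of_countable g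
  have hcomp : g ∘ X 0 = (X 0 ⁻¹' {x}).indicator 1 := by
    ext ω
    by_cases h : X 0 ω = x <;> simp [g, h]
  have hint : Integrable (g ∘ X 0) μ := by
    rw [hcomp]; exact (integrable_const 1).indicator ((hX 0) (measurableSet_singleton x))
  have hmean : μ[g ∘ X 0] = q x := by
    rw [hcomp, integral_indicator_one ((hX 0) (measurableSet_singleton x))]
    exact hdist 0 x
  have hslln := strong_law_ae (fun n => g ∘ X n) hint (fun i j hij => (hindep hij).comp hg hg)
    fun n => (hident n).comp hg
  rw [hmean] at hslln
  filter_upwards [hslln] with ω hω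
  convert hω using 2 with t
  rw [empirical, count, smul_eq_mul, inv_mul_eq_div, card_filter]
  push_cast
  rfl

end KTTest

theorem kt_test_power_one_general (m : ℕ)
    {Ω : Type*} {m0 : MeasurableSpace Ω} {μ : Measure Ω} [IsProbabilityMeasure μ]
    (X : ℕ → Ω → Fin m) (hX : ∀ n, Measurable (X n))
    (hiid : iIndepFun X μ)
    (q p : Fin m → ℝ)
    (hqnn : ∀ x, 0 ≤ q x) (hqsum : ∑ x, q x = 1)
    (hppos : ∀ x, 0 < p x) (hpsum : ∑ x, p x = 1)
    (hdist : ∀ (n : ℕ) (x : Fin m), (μ {ω | X n ω = x}).toReal = q x)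
    (hqp : q ≠ p)
    (L : ℕ → Ω → ℝ)
    -- `L t = ∏_{i<t} q̂_i(X_i)/p(X_i)`, with KT estimator built from the previous samples
    (hL : ∀ t ω, L t ω = ∏ i ∈ Finset.range t,
      (((((Finset.range i).filter (fun j => X j ω = X i ω)).card : ℝ) + 1/2) / (i + m/2))
        / p (X i ω)) :
    ∀ᵐ ω ∂μ, Filter.Tendsto (fun t => L t ω) Filter.atTop Filter.atTop ∧
      ∀ α : ℝ, 0 < α → α < 1 → ∃ t : ℕ, 1 / α ≤ L t ω := by
  open KTTest in
  filter_upwards [tendsto_empirical_ae hX (fun i j hij => hiid.indepFun hij) hdist] with ω hfreq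
  have hL_eq : (fun t => L t ω) = ktLikelihood (X · ω) p := by
    ext t
    rw [hL, ktLikelihood]
    simp only [ktEstimate, count, Fintype.card_fin]
  have htend := hL_eq ▸ tendsto_ktLikelihood_atTop hqnn hppos (hqsum.trans hpsum.symm) hqp hfreq
  exact ⟨htend, fun α _ _ => (htend.eventually_ge_atTop (1 / α)).exists⟩

/-- Power one of the sequential test with the KT estimator: if `X_1, X_2, …` are i.i.d. from
`q ≠ p` (with `p` strictly positive), then almost surely the likelihood-ratio process
`L t = ∏_{i=1}^t q̂_i(X_i)/p(X_i)` (with `q̂` the KT add-1/2 estimator built from past samples)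
tends to infinity, and hence for every `α ∈ (0,1)` the stopping time
`τ = inf{t : L t ≥ 1/α}` is finite almost surely. -/
theorem kt_test_power_one (m : ℕ) (hm : 1 ≤ m)
    {Ω : Type*} {m0 : MeasurableSpace Ω} {μ : Measure Ω} [IsProbabilityMeasure μ]
    (X : ℕ → Ω → Fin m) (hX : ∀ n, Measurable (X n))
    (hiid : iIndepFun X μ)
    (q p : Fin m → ℝ)
    (hqnn : ∀ x, 0 ≤ q x) (hqsum : ∑ x, q x = 1)
    (hppos : ∀ x, 0 < p x) (hpsum : ∑ x, p x = 1)
    (hdist : ∀ (n : ℕ) (x : Fin m), (μ {ω | X n ω = x}).toReal = q x)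
    (hqp : q ≠ p)
    (L : ℕ → Ω → ℝ)
    -- `L t = ∏_{i<t} q̂_i(X_i)/p(X_i)`, with KT estimator built from the previous samples
    (hL : ∀ t ω, L t ω = ∏ i ∈ Finset.range t,
      (((((Finset.range i).filter (fun j => X j ω = X i ω)).card : ℝ) + 1/2) / (i + m/2))
        / p (X i ω)) :
    ∀ᵐ ω ∂μ, Filter.Tendsto (fun t => L t ω) Filter.atTop Filter.atTop ∧
      ∀ α : ℝ, 0 < α → α < 1 → ∃ t : ℕ, 1 / α ≤ L t ω :=
  kt_test_power_one_general m (m0 := m0) X hX hiid q p hqnn hqsum hppos hpsum hdist hqp L hL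
end
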